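/- arXiv:1512.06210 — 2 statements merged into one kernel-verified Lean document; each statement's English description precedes it below -/
import Mathlib

section
/- Fix a real ρ ≠ 0. Suppose that for each σ ∈ {ρ, −ρ} there are given twice differentiable matrix functions F_+(·,σ), F_-(·,σ), F̄_+(·,σ), F̄_-(·,σ) : ℝ → M_m(ℂ) and matrices A(σ), B(σ) ∈ M_m(ℂ) such that: (i) all matrix Wronskians ⟨F̄_±(·,σ'), F_±(·,σ'')⟩ with σ', σ'' ∈ {ρ,−ρ} are constant in x; (ii) ⟨F̄_-(·,σ), F_-(·,σ)⟩ = 0_m, ⟨F̄_-(·,σ), F_-(·,−σ)⟩ = −2iσ·I_m, ⟨F̄_+(·,σ), F_+(·,σ)⟩ = 0_m, and ⟨F̄_+(·,σ), F_+(·,−σ)⟩ = 2iσ·I_m; (iii) F_+(x,σ) = F_-(x,−σ)A(σ) + F_-(x,σ)B(σ) and F̄_+(x,σ) = A(−σ)*·F̄_-(x,−σ) + B(−σ)*·F̄_-(x,σ) for all x ∈ ℝ. Then B(−ρ)*A(ρ) = A(−ρ)*B(ρ) and A(ρ)*A(ρ) = I_m + B(ρ)*B(ρ). -/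
open Matrix
open scoped Matrix.Norms.L2Operator

/-!
Substitute the expansions of `F_+` and `F̄_+` in terms of `F_-` and `F̄_-` into the Wronskians
`⟨F̄_+(·,ρ), F_+(·,ρ)⟩ = 0` and `⟨F̄_+(·,-ρ), F_+(·,ρ)⟩ = -2iρ I`. The Wronskian is bilinear, and
the normalization of the `F_-` Wronskians makes each of the four resulting terms a multiple
`0` or `±2iρ` of a product of scattering coefficients; cancelling `2iρ ≠ 0` gives the two
relations.
-/

def wronskian {R : Type*} [Ring R] (z z' y y' : R) : R := z' * y - z * y'

theorem wronskian_add_mul {R : Type*} [Ring R] (P Q U V z₁ z₁' z₂ z₂' y₁ y₁' y₂ y₂' : R) :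
    wronskian (P * z₁ + Q * z₂) (P * z₁' + Q * z₂') (y₁ * U + y₂ * V) (y₁' * U + y₂' * V) =
      P * wronskian z₁ z₁' y₁ y₁' * U + P * wronskian z₁ z₁' y₂ y₂' * V +
        Q * wronskian z₂ z₂' y₁ y₁' * U + Q * wronskian z₂ z₂' y₂ y₂' * V := by
  unfold wronskian
  noncomm_ring

theorem wronskian_add_mul_of_eq_smul_one {K R : Type*} [CommRing K] [Ring R] [Algebra K R]
    {z₁ z₁' z₂ z₂' y₁ y₁' y₂ y₂' : R} {α β γ δ : K}
    (h₁₁ : wronskian z₁ z₁' y₁ y₁' = α • 1) (h₁₂ : wronskian z₁ z₁' y₂ y₂' = β • 1)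
    (h₂₁ : wronskian z₂ z₂' y₁ y₁' = γ • 1) (h₂₂ : wronskian z₂ z₂' y₂ y₂' = δ • 1)
    (P Q U V : R) :
    wronskian (P * z₁ + Q * z₂) (P * z₁' + Q * z₂') (y₁ * U + y₂ * V) (y₁' * U + y₂' * V) =
      α • (P * U) + β • (P * V) + γ • (Q * U) + δ • (Q * V) := by
  simp only [wronskian_add_mul, h₁₁, h₁₂, h₂₁, h₂₂, mul_smul_comm, smul_mul_assoc, mul_one]

section Derivatives

variable {𝕜 R : Type*} [NontriviallyNormedField 𝕜] [NormedRing R] [NormedAlgebra 𝕜 R]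
  {f g h : 𝕜 → R} {f' g' h' : R} {x : 𝕜}

theorem HasDerivAt.eq_mul_const_add_mul_const (hf : HasDerivAt f f' x) (hg : HasDerivAt g g' x)
    (hh : HasDerivAt h h' x) {a b : R} (hfgh : ∀ y, f y = g y * a + h y * b) :
    f' = g' * a + h' * b := by
  rw [funext hfgh] at hf
  exact hf.unique ((hg.mul_const a).add (hh.mul_const b))

theorem HasDerivAt.eq_const_mul_add_const_mul (hf : HasDerivAt f f' x) (hg : HasDerivAt g g' x)
    (hh : HasDerivAt h h' x) {a b : R} (hfgh : ∀ y, f y = a * g y + b * h y) :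
    f' = a * g' + b * h' := by
  rw [funext hfgh] at hf
  exact hf.unique ((hg.const_mul a).add (hh.const_mul b))

end Derivatives

theorem scattering_coefficients_unitarity_relations_general
    (m : ℕ) (ρ : ℝ) (hρ : ρ ≠ 0)
    (Fp Fm Fbp Fbm Fp' Fm' Fbp' Fbm' : ℝ → ℝ → Matrix (Fin m) (Fin m) ℂ)
    (A B : ℝ → Matrix (Fin m) (Fin m) ℂ)
    -- twice differentiability: the given functions have the given first derivatives,
    -- which are themselves differentiable
    (hdFp : ∀ σ ∈ ({ρ, -ρ} : Set ℝ), ∀ x, HasDerivAt (Fp σ) (Fp' σ x) x)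
    (hdFm : ∀ σ ∈ ({ρ, -ρ} : Set ℝ), ∀ x, HasDerivAt (Fm σ) (Fm' σ x) x)
    (hdFbp : ∀ σ ∈ ({ρ, -ρ} : Set ℝ), ∀ x, HasDerivAt (Fbp σ) (Fbp' σ x) x)
    (hdFbm : ∀ σ ∈ ({ρ, -ρ} : Set ℝ), ∀ x, HasDerivAt (Fbm σ) (Fbm' σ x) x)
    -- (ii) the normalization of the Wronskians
    (hWmm : ∀ σ ∈ ({ρ, -ρ} : Set ℝ), ∀ x : ℝ,
      Fbm' σ x * Fm σ x - Fbm σ x * Fm' σ x = 0)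
    (hWmm' : ∀ σ ∈ ({ρ, -ρ} : Set ℝ), ∀ x : ℝ,
      Fbm' σ x * Fm (-σ) x - Fbm σ x * Fm' (-σ) x = (-(2 * Complex.I * (σ : ℂ))) • (1 : Matrix (Fin m) (Fin m) ℂ))
    (hWpp : ∀ σ ∈ ({ρ, -ρ} : Set ℝ), ∀ x : ℝ,
      Fbp' σ x * Fp σ x - Fbp σ x * Fp' σ x = 0)
    (hWpp' : ∀ σ ∈ ({ρ, -ρ} : Set ℝ), ∀ x : ℝ,
      Fbp' σ x * Fp (-σ) x - Fbp σ x * Fp' (-σ) x = (2 * Complex.I * (σ : ℂ)) • (1 : Matrix (Fin m) (Fin m) ℂ))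
    -- (iii) the expansions
    (hexp : ∀ σ ∈ ({ρ, -ρ} : Set ℝ), ∀ x : ℝ,
      Fp σ x = Fm (-σ) x * A σ + Fm σ x * B σ)
    (hexpbar : ∀ σ ∈ ({ρ, -ρ} : Set ℝ), ∀ x : ℝ,
      Fbp σ x = (A (-σ))ᴴ * Fbm (-σ) x + (B (-σ))ᴴ * Fbm σ x) :
    (B (-ρ))ᴴ * A ρ = (A (-ρ))ᴴ * B ρ ∧
      (A ρ)ᴴ * A ρ = 1 + (B ρ)ᴴ * B ρ := by
  have hρ_mem : ρ ∈ ({ρ, -ρ} : Set ℝ) := Set.mem_insert _ _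
  have hnegρ_mem : -ρ ∈ ({ρ, -ρ} : Set ℝ) := Set.mem_insert_of_mem _ rfl
  set c : ℂ := 2 * Complex.I * ρ
  have hc : c ≠ 0 := by simp [c, hρ]
  have hexpbar_neg : ∀ x, Fbp (-ρ) x = (A ρ)ᴴ * Fbm ρ x + (B ρ)ᴴ * Fbm (-ρ) x := by
    simpa only [neg_neg] using hexpbar (-ρ) hnegρ_mem
  have hFp' := (hdFp ρ hρ_mem 0).eq_mul_const_add_mul_const (hdFm (-ρ) hnegρ_mem 0) (hdFm ρ hρ_mem 0)
    (hexp ρ hρ_mem)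
  have hFbp' := (hdFbp ρ hρ_mem 0).eq_const_mul_add_const_mul (hdFbm (-ρ) hnegρ_mem 0) (hdFbm ρ hρ_mem 0)
    (hexpbar ρ hρ_mem)
  have hFbp'_neg := (hdFbp (-ρ) hnegρ_mem 0).eq_const_mul_add_const_mul (hdFbm ρ hρ_mem 0)
    (hdFbm (-ρ) hnegρ_mem 0) hexpbar_neg
  have hW_pos_pos : wronskian (Fbm ρ 0) (Fbm' ρ 0) (Fm ρ 0) (Fm' ρ 0) = (0 : ℂ) • 1 := by
    rw [zero_smul]; exact hWmm ρ hρ_mem 0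
  have hW_neg_neg : wronskian (Fbm (-ρ) 0) (Fbm' (-ρ) 0) (Fm (-ρ) 0) (Fm' (-ρ) 0) = (0 : ℂ) • 1 := by
    rw [zero_smul]; exact hWmm (-ρ) hnegρ_mem 0
  have hW_pos_neg : wronskian (Fbm ρ 0) (Fbm' ρ 0) (Fm (-ρ) 0) (Fm' (-ρ) 0) = (-c) • 1 :=
    hWmm' ρ hρ_mem 0
  have hW_neg_pos : wronskian (Fbm (-ρ) 0) (Fbm' (-ρ) 0) (Fm ρ 0) (Fm' ρ 0) = c • 1 := by
    unfold wronskian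
    simpa [c] using hWmm' (-ρ) hnegρ_mem 0
  constructor
  · have hW : wronskian (Fbp ρ 0) (Fbp' ρ 0) (Fp ρ 0) (Fp' ρ 0) = 0 := hWpp ρ hρ_mem 0
    rw [hexpbar ρ hρ_mem, hFbp', hexp ρ hρ_mem, hFp',
      wronskian_add_mul_of_eq_smul_one hW_neg_neg hW_neg_pos hW_pos_neg hW_pos_pos] at hW
    apply smul_right_injective _ hc
    linear_combination (norm := module) -hW
  · have hW : wronskian (Fbp (-ρ) 0) (Fbp' (-ρ) 0) (Fp ρ 0) (Fp' ρ 0) = (-c) • 1 := by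
      unfold wronskian
      simpa [c] using hWpp' (-ρ) hnegρ_mem 0
    rw [hexpbar_neg, hFbp'_neg, hexp ρ hρ_mem, hFp',
      wronskian_add_mul_of_eq_smul_one hW_pos_neg hW_pos_pos hW_neg_neg hW_neg_pos] at hW
    apply smul_right_injective _ hc
    linear_combination (norm := module) -hW

/-- Under the standard Wronskian properties of the Jost solutions
`F_±(·,σ)`, `F̄_±(·,σ)` (for `σ ∈ {ρ, -ρ}`, `ρ` real nonzero) and the expansions
`F_+(x,σ) = F_-(x,-σ)A(σ) + F_-(x,σ)B(σ)`,
`F̄_+(x,σ) = A(-σ)* F̄_-(x,-σ) + B(-σ)* F̄_-(x,σ)`,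
one has `B(-ρ)* A(ρ) = A(-ρ)* B(ρ)` and `A(ρ)* A(ρ) = I + B(ρ)* B(ρ)`. -/
theorem scattering_coefficients_unitarity_relations
    (m : ℕ) (ρ : ℝ) (hρ : ρ ≠ 0)
    (Fp Fm Fbp Fbm Fp' Fm' Fbp' Fbm' : ℝ → ℝ → Matrix (Fin m) (Fin m) ℂ)
    (A B : ℝ → Matrix (Fin m) (Fin m) ℂ)
    -- twice differentiability: the given functions have the given first derivatives,
    -- which are themselves differentiable
    (hdFp : ∀ σ ∈ ({ρ, -ρ} : Set ℝ), ∀ x, HasDerivAt (Fp σ) (Fp' σ x) x)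
    (hdFm : ∀ σ ∈ ({ρ, -ρ} : Set ℝ), ∀ x, HasDerivAt (Fm σ) (Fm' σ x) x)
    (hdFbp : ∀ σ ∈ ({ρ, -ρ} : Set ℝ), ∀ x, HasDerivAt (Fbp σ) (Fbp' σ x) x)
    (hdFbm : ∀ σ ∈ ({ρ, -ρ} : Set ℝ), ∀ x, HasDerivAt (Fbm σ) (Fbm' σ x) x)
    (hd2Fp : ∀ σ ∈ ({ρ, -ρ} : Set ℝ), Differentiable ℝ (Fp' σ))
    (hd2Fm : ∀ σ ∈ ({ρ, -ρ} : Set ℝ), Differentiable ℝ (Fm' σ))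
    (hd2Fbp : ∀ σ ∈ ({ρ, -ρ} : Set ℝ), Differentiable ℝ (Fbp' σ))
    (hd2Fbm : ∀ σ ∈ ({ρ, -ρ} : Set ℝ), Differentiable ℝ (Fbm' σ))
    -- (i) all Wronskians ⟨F̄_±(·,σ'), F_±(·,σ'')⟩ are constant in x
    (hconst : ∀ σ' ∈ ({ρ, -ρ} : Set ℝ), ∀ σ'' ∈ ({ρ, -ρ} : Set ℝ), ∀ x y : ℝ,
      (Fbp' σ' x * Fp σ'' x - Fbp σ' x * Fp' σ'' x
        = Fbp' σ' y * Fp σ'' y - Fbp σ' y * Fp' σ'' y) ∧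
      (Fbp' σ' x * Fm σ'' x - Fbp σ' x * Fm' σ'' x
        = Fbp' σ' y * Fm σ'' y - Fbp σ' y * Fm' σ'' y) ∧
      (Fbm' σ' x * Fp σ'' x - Fbm σ' x * Fp' σ'' x
        = Fbm' σ' y * Fp σ'' y - Fbm σ' y * Fp' σ'' y) ∧
      (Fbm' σ' x * Fm σ'' x - Fbm σ' x * Fm' σ'' x
        = Fbm' σ' y * Fm σ'' y - Fbm σ' y * Fm' σ'' y))
    -- (ii) the normalization of the Wronskians
    (hWmm : ∀ σ ∈ ({ρ, -ρ} : Set ℝ), ∀ x : ℝ,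
      Fbm' σ x * Fm σ x - Fbm σ x * Fm' σ x = 0)
    (hWmm' : ∀ σ ∈ ({ρ, -ρ} : Set ℝ), ∀ x : ℝ,
      Fbm' σ x * Fm (-σ) x - Fbm σ x * Fm' (-σ) x = (-(2 * Complex.I * (σ : ℂ))) • (1 : Matrix (Fin m) (Fin m) ℂ))
    (hWpp : ∀ σ ∈ ({ρ, -ρ} : Set ℝ), ∀ x : ℝ,
      Fbp' σ x * Fp σ x - Fbp σ x * Fp' σ x = 0)
    (hWpp' : ∀ σ ∈ ({ρ, -ρ} : Set ℝ), ∀ x : ℝ,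
      Fbp' σ x * Fp (-σ) x - Fbp σ x * Fp' (-σ) x = (2 * Complex.I * (σ : ℂ)) • (1 : Matrix (Fin m) (Fin m) ℂ))
    -- (iii) the expansions
    (hexp : ∀ σ ∈ ({ρ, -ρ} : Set ℝ), ∀ x : ℝ,
      Fp σ x = Fm (-σ) x * A σ + Fm σ x * B σ)
    (hexpbar : ∀ σ ∈ ({ρ, -ρ} : Set ℝ), ∀ x : ℝ,
      Fbp σ x = (A (-σ))ᴴ * Fbm (-σ) x + (B (-σ))ᴴ * Fbm σ x) :
    (B (-ρ))ᴴ * A ρ = (A (-ρ))ᴴ * B ρ ∧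
      (A ρ)ᴴ * A ρ = 1 + (B ρ)ᴴ * B ρ :=
  scattering_coefficients_unitarity_relations_general m ρ hρ Fp Fm Fbp Fbm Fp' Fm' Fbp' Fbm' A B
    hdFp hdFm hdFbp hdFbm hWmm hWmm' hWpp hWpp' hexp hexpbar
end

section
/- Let U be a matrix function with values in M_m(ℂ), analytic on {Im ρ > 0} and continuous on {Im ρ ≥ 0}∖{0}, such that: (i) det U(ρ) ≠ 0 for all ρ with Im ρ ≥ 0, ρ ≠ 0; (ii) U(ρ)*·U(ρ) = I_m for all real ρ ≠ 0; (iii) ‖U(ρ) − I_m‖ = O(|ρ|⁻¹) and ‖U(ρ)⁻¹ − I_m‖ = O(|ρ|⁻¹) as |ρ| → ∞ in the closed upper half-plane; (iv) U(ρ) and U(ρ)⁻¹ are bounded in a punctured neighborhood of ρ = 0 intersected with the closed upper half-plane. Then U(ρ) = I_m for all ρ with Im ρ ≥ 0, ρ ≠ 0. -/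
open Matrix
open scoped Matrix.Norms.L2Operator

/-!
Work entrywise with `W = U - 1` and `W' = U⁻¹ - 1`. Both are holomorphic in the upper
half-plane, bounded near `0` and `O(1/|ρ|)` at infinity, and `W' = Wᴴ` on the real line since
`U` is unitary there. So for `f = W i j` and `h = W' j i` the scalar functions `f + h` and
`i (f - h)` are real on `ℝ \ {0}`, and it suffices to show that such a function `f` vanishes.

The maximum principle on large half-discs, applied to `exp (i f) * (z / (z + i)) ^ ε`, gives
`Im f ≥ 0` after `ε → 0`: the weight has modulus `≤ 1`, tends to `1` as `ε → 0`, and vanishes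
at the exceptional boundary point `0`, where `f` is only known to be bounded. The same for `-f`
gives `Im f = 0`; then `f` is constant by the open mapping theorem, and the constant is `0` by
the decay at infinity.
-/

open Complex Set Filter Bornology Asymptotics
open scoped Topology ComplexConjugate

namespace Complex

lemma add_I_ne_zero_of_im_nonneg {z : ℂ} (hz : 0 ≤ z.im) : z + I ≠ 0 := by
  intro h
  have := congrArg im h
  simp at this
  linarith

lemma norm_le_norm_add_I_of_im_nonneg {z : ℂ} (hz : 0 ≤ z.im) : ‖z‖ ≤ ‖z + I‖ := by
  rw [norm_def, norm_def]
  gcongr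
  simp only [normSq_apply, add_re, add_im, I_re, I_im]
  nlinarith

lemma div_add_I_mem_slitPlane {z : ℂ} (hz : 0 ≤ z.im) (h0 : z ≠ 0) :
    z / (z + I) ∈ slitPlane := by
  have hN : 0 < normSq (z + I) := normSq_pos.2 (add_I_ne_zero_of_im_nonneg hz)
  rw [mem_slitPlane_iff, div_re, div_im]
  simp only [add_re, add_im, I_re, I_im, add_zero]
  rcases eq_or_ne z.re 0 with hre | hre
  · have him : 0 < z.im := hz.lt_of_ne fun h => h0 (Complex.ext hre h.symm)
    left
    rw [hre]
    positivity
  · right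
    rw [← sub_div]
    exact div_ne_zero (by ring_nf; simpa using hre) hN.ne'

end Complex

noncomputable def halfPlaneWeight (ε : ℝ) (z : ℂ) : ℂ := (z / (z + I)) ^ (ε : ℂ)

namespace halfPlaneWeight

lemma norm_eq (ε : ℝ) (z : ℂ) : ‖halfPlaneWeight ε z‖ = ‖z / (z + I)‖ ^ ε :=
  norm_cpow_real _ _

lemma norm_le_one {ε : ℝ} (hε : 0 ≤ ε) {z : ℂ} (hz : 0 ≤ z.im) :
    ‖halfPlaneWeight ε z‖ ≤ 1 := by
  rw [norm_eq, norm_div]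
  exact Real.rpow_le_one (by positivity)
    (div_le_one_of_le₀ (norm_le_norm_add_I_of_im_nonneg hz) (norm_nonneg _)) hε

lemma apply_zero {ε : ℝ} (hε : ε ≠ 0) : halfPlaneWeight ε 0 = 0 := by
  simp [halfPlaneWeight, zero_cpow (ofReal_ne_zero.2 hε)]

lemma differentiableAt (ε : ℝ) {z : ℂ} (hz : 0 ≤ z.im) (h0 : z ≠ 0) :
    DifferentiableAt ℂ (halfPlaneWeight ε) z :=
  (differentiableAt_id.div (differentiableAt_id.add_const I)
    (add_I_ne_zero_of_im_nonneg hz)).cpow_const (div_add_I_mem_slitPlane hz h0)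

lemma tendsto_zero {ε : ℝ} (hε : 0 < ε) : Tendsto (halfPlaneWeight ε) (𝓝 0) (𝓝 0) := by
  rw [tendsto_zero_iff_norm_tendsto_zero]
  simp_rw [norm_eq]
  have h : ContinuousAt (fun z : ℂ => ‖z / (z + I)‖) 0 := by
    fun_prop (disch := simp)
  simpa [Real.zero_rpow hε.ne'] using h.tendsto.rpow_const (Or.inr hε.le)

lemma tendsto_norm_one {z : ℂ} (hz : 0 ≤ z.im) (h0 : z ≠ 0) :
    Tendsto (fun ε => ‖halfPlaneWeight ε z‖) (𝓝 0) (𝓝 1) := by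
  simp_rw [norm_eq]
  have hne : ‖z / (z + I)‖ ≠ 0 :=
    norm_ne_zero_iff.2 (div_ne_zero h0 (add_I_ne_zero_of_im_nonneg hz))
  simpa using (Real.continuousAt_const_rpow hne (b := 0)).tendsto

end halfPlaneWeight

theorem norm_mul_halfPlaneWeight_le {g : ℂ → ℂ} {C R ε : ℝ} (hε : 0 < ε)
    (hd : DifferentiableOn ℂ g {z | 0 < z.im})
    (hc : ContinuousOn g {z | 0 ≤ z.im ∧ z ≠ 0})
    (hzero : g =O[𝓝[{z | 0 ≤ z.im ∧ z ≠ 0}] 0] (fun _ => (1 : ℝ)))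
    (hreal : ∀ t : ℝ, t ≠ 0 → ‖g t‖ ≤ C)
    (harc : ∀ z : ℂ, 0 ≤ z.im → ‖z‖ = R → ‖g z‖ ≤ C)
    {z : ℂ} (hz : 0 < z.im) (hzR : ‖z‖ < R) :
    ‖g z‖ * ‖halfPlaneWeight ε z‖ ≤ C := by
  set G : ℂ → ℂ := fun w => g w * halfPlaneWeight ε w
  set D : Set ℂ := {w | 0 < w.im} ∩ Metric.ball 0 R
  have hDopen : IsOpen D := (isOpen_lt continuous_const continuous_im).inter Metric.isOpen_ball
  have hclosure : closure D ⊆ {w | 0 ≤ w.im} ∩ Metric.closedBall 0 R :=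
    closure_minimal (inter_subset_inter (fun w (hw : 0 < w.im) => hw.le)
      Metric.ball_subset_closedBall)
      ((isClosed_le continuous_const continuous_im).inter Metric.isClosed_closedBall)
  have hGcont : ContinuousOn G {w | 0 ≤ w.im} := by
    intro w hw
    rcases eq_or_ne w 0 with rfl | hw0
    · have hS : insert (0 : ℂ) {w : ℂ | 0 ≤ w.im ∧ w ≠ 0} = {w | 0 ≤ w.im} := by
        ext w; by_cases h : w = 0 <;> simp [h]
      rw [← hS, continuousWithinAt_insert_self, ContinuousWithinAt]
      simp only [G, halfPlaneWeight.apply_zero hε.ne', mul_zero]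
      simpa only [mul_comm] using ((halfPlaneWeight.tendsto_zero hε).mono_left
        nhdsWithin_le_nhds).zero_mul_isBoundedUnder_le ((isBigO_one_iff ℝ).1 hzero)
    · exact ((hc w ⟨hw, hw0⟩).mul
        (halfPlaneWeight.differentiableAt ε hw hw0).continuousAt.continuousWithinAt)
        |>.mono_of_mem_nhdsWithin (inter_mem_nhdsWithin _ (isOpen_ne.mem_nhds hw0))
  have hG : DiffContOnCl ℂ G D := by
    refine ⟨fun w hw => ?_, hGcont.mono (hclosure.trans inter_subset_left)⟩
    exact ((hd w hw.1).mono inter_subset_left).mul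
      (halfPlaneWeight.differentiableAt ε hw.1.le
        (ne_of_apply_ne im hw.1.ne')).differentiableWithinAt
  have hfront : ∀ w ∈ frontier D, ‖G w‖ ≤ C := by
    intro w hw
    rw [hDopen.frontier_eq] at hw
    obtain ⟨hwim : 0 ≤ w.im, hwR : ‖w‖ ≤ R⟩ := by simpa using hclosure hw.1
    rw [norm_mul]
    rcases eq_or_ne w 0 with rfl | hw0
    · simpa [halfPlaneWeight.apply_zero hε.ne'] using
        (norm_nonneg _).trans (hreal 1 one_ne_zero)
    refine (mul_le_of_le_one_right (norm_nonneg _)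
      (halfPlaneWeight.norm_le_one hε.le hwim)).trans ?_
    rcases hwim.eq_or_lt with hwim | hwim
    · have hwre : (w.re : ℂ) = w := Complex.ext rfl (by simp [hwim])
      rw [← hwre]
      exact hreal w.re fun h => hw0 (by rw [← hwre, h, ofReal_zero])
    · refine harc w hwim.le (hwR.antisymm (not_lt.1 fun h => hw.2 ⟨hwim, ?_⟩))
      simpa using h
  simpa [G, norm_mul] using Complex.norm_le_of_forall_mem_frontier_norm_le
    (Metric.isBounded_ball.subset inter_subset_right) hG hfront
    (subset_closure ⟨hz, by simpa using hzR⟩)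

theorem norm_le_of_forall_real_norm_le {g : ℂ → ℂ} {C : ℝ}
    (hd : DifferentiableOn ℂ g {z | 0 < z.im})
    (hc : ContinuousOn g {z | 0 ≤ z.im ∧ z ≠ 0})
    (hzero : g =O[𝓝[{z | 0 ≤ z.im ∧ z ≠ 0}] 0] (fun _ => (1 : ℝ)))
    (hreal : ∀ t : ℝ, t ≠ 0 → ‖g t‖ ≤ C)
    (hinf : ∀ C' > C, ∀ᶠ z in cobounded ℂ ⊓ 𝓟 {z | 0 ≤ z.im}, ‖g z‖ ≤ C')
    {z : ℂ} (hz : 0 < z.im) : ‖g z‖ ≤ C := by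
  refine le_of_forall_gt_imp_ge_of_dense fun C' hC' => ?_
  obtain ⟨R, -, hR⟩ :=
    (hasBasis_cobounded_norm.inf_principal _).eventually_iff.1 (hinf C' hC')
  have hweighted : ∀ ε > 0, ‖g z‖ * ‖halfPlaneWeight ε z‖ ≤ C' := fun ε hε =>
    norm_mul_halfPlaneWeight_le (R := max R (‖z‖ + 1)) hε hd hc hzero
      (fun t ht => (hreal t ht).trans hC'.le)
      (fun w hw hwR => hR ⟨(le_max_left _ _).trans hwR.ge, hw⟩) hz
      ((lt_add_one _).trans_le (le_max_right _ _))
  have hlim : Tendsto (fun ε => ‖g z‖ * ‖halfPlaneWeight ε z‖) (𝓝[>] 0) (𝓝 ‖g z‖) := by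
    simpa using ((halfPlaneWeight.tendsto_norm_one hz.le (ne_of_apply_ne im hz.ne')).const_mul
      ‖g z‖).mono_left nhdsWithin_le_nhds
  exact le_of_tendsto hlim (eventually_nhdsWithin_of_forall hweighted)

structure UpperHalfPlaneDecaying {E : Type*} [NormedAddCommGroup E] [NormedSpace ℂ E]
    (f : ℂ → E) : Prop where
  differentiableOn : DifferentiableOn ℂ f {z | 0 < z.im}
  continuousOn : ContinuousOn f {z | 0 ≤ z.im ∧ z ≠ 0}
  isBigO_one : f =O[𝓝[{z | 0 ≤ z.im ∧ z ≠ 0}] 0] (fun _ => (1 : ℝ))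
  tendsto_zero : Tendsto f (cobounded ℂ ⊓ 𝓟 {z | 0 ≤ z.im}) (𝓝 0)

namespace UpperHalfPlaneDecaying

variable {E F : Type*} [NormedAddCommGroup E] [NormedSpace ℂ E]
  [NormedAddCommGroup F] [NormedSpace ℂ F] {f h : ℂ → E}

lemma of_norm_le (hd : DifferentiableOn ℂ f {z | 0 < z.im})
    (hc : ContinuousOn f {z | 0 ≤ z.im ∧ z ≠ 0}) {B c : ℝ}
    (hzero : ∀ᶠ z in 𝓝[{z | 0 ≤ z.im ∧ z ≠ 0}] 0, ‖f z‖ ≤ B)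
    (hinf : ∀ᶠ z in cobounded ℂ ⊓ 𝓟 {z | 0 ≤ z.im}, ‖f z‖ ≤ c / ‖z‖) :
    UpperHalfPlaneDecaying f where
  differentiableOn := hd
  continuousOn := hc
  isBigO_one := (isBigO_one_iff ℝ).2 ⟨B, hzero⟩
  tendsto_zero := by
    refine squeeze_zero_norm' hinf ?_
    simpa [div_eq_mul_inv] using ((tendsto_norm_cobounded_atTop.mono_left
      inf_le_left).inv_tendsto_atTop).const_mul c

lemma add (hf : UpperHalfPlaneDecaying f) (hh : UpperHalfPlaneDecaying h) :
    UpperHalfPlaneDecaying (fun z => f z + h z) where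
  differentiableOn := hf.differentiableOn.add hh.differentiableOn
  continuousOn := hf.continuousOn.add hh.continuousOn
  isBigO_one := hf.isBigO_one.add hh.isBigO_one
  tendsto_zero := by simpa using hf.tendsto_zero.add hh.tendsto_zero

lemma clm_comp (hf : UpperHalfPlaneDecaying f) (Ψ : E →L[ℂ] F) :
    UpperHalfPlaneDecaying (fun z => Ψ (f z)) where
  differentiableOn := Ψ.differentiable.comp_differentiableOn hf.differentiableOn
  continuousOn := Ψ.continuous.comp_continuousOn hf.continuousOn
  isBigO_one := (Ψ.isBigO_comp f _).trans hf.isBigO_one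
  tendsto_zero := (Ψ.continuous.tendsto' 0 0 (map_zero Ψ)).comp hf.tendsto_zero

lemma neg (hf : UpperHalfPlaneDecaying f) : UpperHalfPlaneDecaying (fun z => -f z) :=
  hf.clm_comp (-ContinuousLinearMap.id ℂ E)

lemma sub (hf : UpperHalfPlaneDecaying f) (hh : UpperHalfPlaneDecaying h) :
    UpperHalfPlaneDecaying (fun z => f z - h z) := by
  simpa only [sub_eq_add_neg] using hf.add hh.neg

lemma const_smul (hf : UpperHalfPlaneDecaying f) (c : ℂ) :
    UpperHalfPlaneDecaying (fun z => c • f z) :=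
  hf.clm_comp (c • ContinuousLinearMap.id ℂ E)

variable {f h : ℂ → ℂ}

theorem im_nonneg (hf : UpperHalfPlaneDecaying f) (hreal : ∀ t : ℝ, t ≠ 0 → (f t).im = 0)
    {z : ℂ} (hz : 0 < z.im) : 0 ≤ (f z).im := by
  have hnorm : ∀ w, ‖cexp (I * f w)‖ = Real.exp (-(f w).im) := by simp [norm_exp]
  have hbound : ‖cexp (I * f z)‖ ≤ 1 := by
    refine norm_le_of_forall_real_norm_le (hf.differentiableOn.const_mul I).cexp
      (continuousOn_const.mul hf.continuousOn).cexp ?_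
      (fun t ht => by simp [hnorm, hreal t ht]) (fun C' hC' => ?_) hz
    · obtain ⟨B, hB⟩ := hf.isBigO_one.bound
      refine (isBigO_one_iff ℝ).2
        (isBoundedUnder_of_eventually_le (a := Real.exp B) (hB.mono fun w hw => ?_))
      rw [hnorm, Real.exp_le_exp]
      simpa using (neg_le_abs _).trans ((abs_im_le_norm _).trans hw)
    · have hlim : Tendsto (fun w => ‖cexp (I * f w)‖) (cobounded ℂ ⊓ 𝓟 {z | 0 ≤ z.im})
          (𝓝 1) := by
        simpa using ((hf.tendsto_zero.const_mul I).cexp).norm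
      exact (hlim.eventually_lt_const hC').mono fun _ => le_of_lt
  rwa [hnorm, Real.exp_le_one_iff, neg_nonpos] at hbound

theorem eq_zero_of_im_eq_zero (hf : UpperHalfPlaneDecaying f)
    (hreal : ∀ t : ℝ, t ≠ 0 → (f t).im = 0) :
    ∀ z : ℂ, 0 ≤ z.im → z ≠ 0 → f z = 0 := by
  have hopen : IsOpen {z : ℂ | 0 < z.im} := isOpen_lt continuous_const continuous_im
  have him : ∀ z ∈ {z : ℂ | 0 < z.im}, (f z).im = 0 := fun z hz =>
    le_antisymm (by simpa using hf.neg.im_nonneg (by simpa using hreal) hz)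
      (hf.im_nonneg hreal hz)
  obtain ⟨c, hc⟩ := (hf.differentiableOn.analyticOnNhd hopen).eq_const_of_im_eq_const him hopen
    ((convex_halfSpace_im_gt 0).isConnected ⟨I, by simp⟩)
  have hpath : Tendsto (fun t : ℝ => t * I) atTop (cobounded ℂ ⊓ 𝓟 {z | 0 ≤ z.im}) :=
    tendsto_inf.2 ⟨tendsto_norm_atTop_iff_cobounded.1 (by simpa using tendsto_abs_atTop_atTop),
      tendsto_principal.2 ((eventually_ge_atTop 0).mono fun t ht => by simpa using ht)⟩
  have hc0 : c = 0 := tendsto_nhds_unique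
    (tendsto_const_nhds.congr' ((eventually_gt_atTop 0).mono fun t ht => (hc _ (by simpa)).symm))
    (hf.tendsto_zero.comp hpath)
  intro z hz hz0
  refine EqOn.of_subset_closure (fun w hw => (hc w hw).trans hc0) hf.continuousOn
    continuousOn_const (fun w (hw : 0 < w.im) => ⟨hw.le, ne_of_apply_ne im hw.ne'⟩) ?_ ⟨hz, hz0⟩
  rw [closure_setOfPred_lt_im]
  exact fun w hw => hw.1

theorem eq_zero_of_eq_conj (hf : UpperHalfPlaneDecaying f) (hh : UpperHalfPlaneDecaying h)
    (hconj : ∀ t : ℝ, t ≠ 0 → h t = conj (f t)) :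
    ∀ z : ℂ, 0 ≤ z.im → z ≠ 0 → f z = 0 := by
  intro z hz hz0
  have hsum := (hf.add hh).eq_zero_of_im_eq_zero (fun t ht => by simp [hconj t ht]) z hz hz0
  have hdiff := ((hf.sub hh).const_smul I).eq_zero_of_im_eq_zero
    (fun t ht => by simp [hconj t ht]) z hz hz0
  simp only [smul_eq_mul] at hdiff
  linear_combination (hsum - I * hdiff) / 2 + (f z - h z) / 2 * I_sq

theorem matrix_eq_zero_of_eq_conjTranspose {n : Type*} [Fintype n] [DecidableEq n]
    {W W' : ℂ → Matrix n n ℂ} (hW : UpperHalfPlaneDecaying W) (hW' : UpperHalfPlaneDecaying W')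
    (hconj : ∀ t : ℝ, t ≠ 0 → W' t = (W t)ᴴ) :
    ∀ z : ℂ, 0 ≤ z.im → z ≠ 0 → W z = 0 := by
  intro z hz hz0
  ext i j
  refine (hW.clm_comp (entryLinearMap ℂ ℂ i j).toContinuousLinearMap).eq_zero_of_eq_conj
    (hW'.clm_comp (entryLinearMap ℂ ℂ j i).toContinuousLinearMap) (fun t ht => ?_) z hz hz0
  simp only [LinearMap.coe_toContinuousLinearMap', entryLinearMap_apply, hconj t ht,
    conjTranspose_apply]
  rfl

end UpperHalfPlaneDecaying

lemma Matrix.differentiableAt_inv {𝕜 n : Type*} [RCLike 𝕜] [Fintype n] [DecidableEq n]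
    {A : Matrix n n 𝕜} (hA : IsUnit A) : DifferentiableAt 𝕜 (fun B : Matrix n n 𝕜 => B⁻¹) A := by
  simpa only [nonsing_inv_eq_ringInverse] using differentiableAt_inverse (𝕜 := 𝕜) hA

/-- Liouville-type rigidity: a matrix function `U`, analytic in the
open upper half-plane and continuous up to the boundary away from the origin, with
everywhere nonvanishing determinant, unitary on the real line, with
`‖U(ρ) - I‖ = O(|ρ|⁻¹)` and `‖U(ρ)⁻¹ - I‖ = O(|ρ|⁻¹)` at infinity, and with `U`, `U⁻¹`
bounded near the origin, must be identically the identity matrix. -/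
theorem unitary_boundary_liouville_rigidity
    (m : ℕ) (U : ℂ → Matrix (Fin m) (Fin m) ℂ)
    (hanal : DifferentiableOn ℂ U {ρ : ℂ | 0 < ρ.im})
    (hcont : ContinuousOn U {ρ : ℂ | 0 ≤ ρ.im ∧ ρ ≠ 0})
    -- (i) det U(ρ) ≠ 0 on the closed upper half-plane minus the origin
    (hdet : ∀ ρ : ℂ, 0 ≤ ρ.im → ρ ≠ 0 → IsUnit (U ρ))
    -- (ii) U is unitary on the real line
    (huni : ∀ ρ : ℝ, ρ ≠ 0 → (U (ρ : ℂ))ᴴ * U (ρ : ℂ) = 1)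
    -- (iii) ‖U(ρ) - I‖ = O(|ρ|⁻¹) and ‖U(ρ)⁻¹ - I‖ = O(|ρ|⁻¹) as |ρ| → ∞
    (hinfty : ∃ c r : ℝ, ∀ ρ : ℂ, 0 ≤ ρ.im → r ≤ ‖ρ‖ →
      ‖U ρ - 1‖ ≤ c / ‖ρ‖ ∧ ‖(U ρ)⁻¹ - 1‖ ≤ c / ‖ρ‖)
    -- (iv) U and U⁻¹ are bounded near ρ = 0
    (hzero : ∃ c δ : ℝ, 0 < δ ∧ ∀ ρ : ℂ, 0 ≤ ρ.im → ρ ≠ 0 → ‖ρ‖ ≤ δ →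
      ‖U ρ‖ ≤ c ∧ ‖(U ρ)⁻¹‖ ≤ c) :
    ∀ ρ : ℂ, 0 ≤ ρ.im → ρ ≠ 0 → U ρ = 1 := by
  obtain ⟨c, r, hinf⟩ := hinfty
  obtain ⟨c₀, δ, hδ, hbdd⟩ := hzero
  have hnear : ∀ᶠ ρ in 𝓝[{ρ : ℂ | 0 ≤ ρ.im ∧ ρ ≠ 0}] 0, ‖U ρ‖ ≤ c₀ ∧ ‖(U ρ)⁻¹‖ ≤ c₀ := by
    filter_upwards [self_mem_nhdsWithin, mem_nhdsWithin_of_mem_nhds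
      (Metric.closedBall_mem_nhds 0 hδ)] with ρ hρ hρδ
    exact hbdd ρ hρ.1 hρ.2 (by simpa using hρδ)
  have hfar : ∀ᶠ ρ in cobounded ℂ ⊓ 𝓟 {ρ : ℂ | 0 ≤ ρ.im},
      ‖U ρ - 1‖ ≤ c / ‖ρ‖ ∧ ‖(U ρ)⁻¹ - 1‖ ≤ c / ‖ρ‖ :=
    (hasBasis_cobounded_norm.inf_principal _).eventually_iff.2
      ⟨r, trivial, fun ρ hρ => hinf ρ hρ.2 hρ.1⟩
  have hW : UpperHalfPlaneDecaying (fun ρ => U ρ - 1) :=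
    .of_norm_le (hanal.sub_const 1) (hcont.sub continuousOn_const)
      (hnear.mono fun ρ hρ => norm_sub_le_of_le hρ.1 le_rfl) (hfar.mono fun ρ hρ => hρ.1)
  have hinv : ∀ ρ : ℂ, 0 ≤ ρ.im → ρ ≠ 0 → DifferentiableAt ℂ (fun A => A⁻¹) (U ρ) :=
    fun ρ hρ hρ0 => differentiableAt_inv (hdet ρ hρ hρ0)
  have hW' : UpperHalfPlaneDecaying (fun ρ => (U ρ)⁻¹ - 1) :=
    .of_norm_le (DifferentiableOn.sub_const (fun ρ hρ => (hinv ρ hρ.le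
        (ne_of_apply_ne im hρ.ne')).comp_differentiableWithinAt ρ (hanal ρ hρ)) 1)
      (ContinuousOn.sub (fun ρ hρ => (hinv ρ hρ.1 hρ.2).continuousAt.comp_continuousWithinAt
        (hcont ρ hρ)) continuousOn_const)
      (hnear.mono fun ρ hρ => norm_sub_le_of_le hρ.2 le_rfl) (hfar.mono fun ρ hρ => hρ.2)
  intro ρ hρ hρ0
  refine sub_eq_zero.1 (hW.matrix_eq_zero_of_eq_conjTranspose hW' (fun t ht => ?_) ρ hρ hρ0)
  rw [inv_eq_left_inv (huni t ht), conjTranspose_sub, conjTranspose_one]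
end
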